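/- arXiv:1301.1918 — 6 statements merged into one kernel-verified Lean document; each statement's English description precedes it below -/
import Mathlib

section
/- Let q be a prime power, let m, n, d be positive integers with m ≥ d and n ≥ d, and let C ⊆ F_q^{m×n} be a rank-metric code (a set of m×n matrices over F_q) with minimum rank distance d, i.e., rank(A − B) ≥ d for all distinct A, B ∈ C, and there exist distinct A, B ∈ C with rank(A − B) = d. Then |C| ≤ q^{max(n,m)·(min(n,m) − d + 1)}. -/
/-! Keeping only `m - d + 1` of the rows is injective on a code of minimum rank distance `d`:
two codewords with the same surviving rows differ by a matrix with at most `d - 1` nonzero rows,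
hence of rank `< d`. This gives `|C| ≤ q ^ (n * (m - d + 1))`, the stated bound when `m ≤ n`;
otherwise transpose. -/

open Matrix Module

/-- The row space of a matrix, i.e. the span of its rows. -/
noncomputable def rowSpace (F : Type) [Field F] {k n : ℕ}
    (M : Matrix (Fin k) (Fin n) F) : Submodule F (Fin n → F) :=
  Submodule.span F (Set.range M)

/-- The block matrix `[0_{k×l} | I_k | M]` of size `k × n`,
where `M` has size `k × (n - k - l)`. -/
def paddedLift (F : Type) [Field F] (k n l : ℕ)
    (M : Matrix (Fin k) (Fin (n - k - l)) F) : Matrix (Fin k) (Fin n) F :=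
  fun i j =>
    if (j : ℕ) < l then 0
    else if h : (j : ℕ) < l + k then (if (j : ℕ) = l + (i : ℕ) then 1 else 0)
    else M i ⟨(j : ℕ) - (l + k), by have := j.isLt; omega⟩

/-- A rank-metric code `C` has minimum rank distance `d`. -/
def HasMinRankDist (F : Type) [Field F] {m n : ℕ}
    (C : Set (Matrix (Fin m) (Fin n) F)) (d : ℕ) : Prop :=
  (∀ A ∈ C, ∀ B ∈ C, A ≠ B → d ≤ (A - B).rank) ∧
  ∃ A ∈ C, ∃ B ∈ C, A ≠ B ∧ (A - B).rank = d

/-- A rank-metric code is MRD if it has minimum rank distance `d` and attains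
the Singleton-like bound. -/
def IsMRD (F : Type) [Field F] [Fintype F] {m n : ℕ}
    (C : Set (Matrix (Fin m) (Fin n) F)) (d : ℕ) : Prop :=
  HasMinRankDist F C d ∧
  Nat.card C = (Fintype.card F) ^ (max n m * (min n m - d + 1))

/-- A constant dimension code `𝒞` of dimension `k` has minimum injection distance `d`. -/
def HasMinInjDist (F : Type) [Field F] {n : ℕ} (k : ℕ)
    (𝒞 : Set (Submodule F (Fin n → F))) (d : ℕ) : Prop :=
  (∀ U ∈ 𝒞, ∀ V ∈ 𝒞, U ≠ V → d ≤ k - finrank F ↥(U ⊓ V)) ∧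
  ∃ U ∈ 𝒞, ∃ V ∈ 𝒞, U ≠ V ∧ k - finrank F ↥(U ⊓ V) = d

section RankMetricCode

variable {F ι κ : Type*} [Field F]

theorem Matrix.rank_le_card_of_eq_zero_of_notMem [Finite ι] [Fintype κ]
    (M : Matrix ι κ F) (s : Finset ι) (h : ∀ i ∉ s, M i = 0) : M.rank ≤ s.card := by
  classical
  have hspan : Submodule.span F (Set.range M) ≤ Submodule.span F ↑(s.image M) := by
    refine Submodule.span_le.2 ?_
    rintro _ ⟨i, rfl⟩
    by_cases hi : i ∈ s
    · exact Submodule.subset_span (Finset.mem_image_of_mem M hi)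
    · simp [h i hi]
  calc M.rank = finrank F (Submodule.span F (Set.range M)) := M.rank_eq_finrank_span_row
    _ ≤ (s.image M).card := (Submodule.finrank_mono hspan).trans (finrank_span_finset_le_card _)
    _ ≤ s.card := Finset.card_image_le

variable [Fintype ι] [Fintype κ] {d : ℕ} {C : Set (Matrix ι κ F)}

theorem injOn_restrict_rows_of_le_rank_sub
    (hC : ∀ A ∈ C, ∀ B ∈ C, A ≠ B → d ≤ (A - B).rank) (s : Finset ι)
    (hs : Fintype.card ι < s.card + d) :
    Set.InjOn (fun (A : Matrix ι κ F) (i : s) => A i) C := by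
  classical
  intro A hA B hB hAB
  by_contra hne
  have hrows : ∀ i ∉ sᶜ, (A - B) i = 0 := fun i hi =>
    sub_eq_zero.2 (congrFun hAB ⟨i, by simpa using hi⟩)
  have hlow := (A - B).rank_le_card_of_eq_zero_of_notMem sᶜ hrows
  have hhigh := hC A hA B hB hne
  rw [Finset.card_compl] at hlow
  have := s.card_le_univ
  omega

theorem card_le_of_le_rank_sub [Fintype F] (hd : 0 < d) (hdι : d ≤ Fintype.card ι)
    (hC : ∀ A ∈ C, ∀ B ∈ C, A ≠ B → d ≤ (A - B).rank) :
    Nat.card C ≤ Fintype.card F ^ (Fintype.card κ * (Fintype.card ι - d + 1)) := by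
  classical
  obtain ⟨s, -, hs⟩ := (Finset.univ : Finset ι).exists_subset_card_eq
    (n := Fintype.card ι - d + 1) (by rw [Finset.card_univ]; omega)
  have hinj := injOn_restrict_rows_of_le_rank_sub hC s (by omega)
  calc Nat.card C ≤ Nat.card (s → κ → F) := Nat.card_le_card_of_injective _ hinj.injective
    _ = Fintype.card F ^ (Fintype.card κ * (Fintype.card ι - d + 1)) := by
        simp [hs, pow_mul]

theorem card_le_of_le_rank_sub' [Fintype F] (hd : 0 < d) (hdκ : d ≤ Fintype.card κ)
    (hC : ∀ A ∈ C, ∀ B ∈ C, A ≠ B → d ≤ (A - B).rank) :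
    Nat.card C ≤ Fintype.card F ^ (Fintype.card ι * (Fintype.card κ - d + 1)) := by
  rw [← Nat.card_image_of_injective transpose_injective C]
  refine card_le_of_le_rank_sub hd hdκ ?_
  rintro _ ⟨A, hA, rfl⟩ _ ⟨B, hB, rfl⟩ hne
  rw [← transpose_sub, rank_transpose]
  exact hC A hA B hB (ne_of_apply_ne _ hne)

end RankMetricCode

theorem rank_metric_singleton_bound_general
    (q : ℕ) (F : Type) [Field F] [Fintype F] (hq : Fintype.card F = q)
    (m n d : ℕ) (hd : 0 < d)
    (hdm : d ≤ m) (hdn : d ≤ n)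
    (C : Set (Matrix (Fin m) (Fin n) F)) (hC : HasMinRankDist F C d) :
    Nat.card C ≤ q ^ (max n m * (min n m - d + 1)) := by
  subst hq
  rcases le_total m n with hmn | hnm
  · rw [max_eq_left hmn, min_eq_right hmn]
    simpa using card_le_of_le_rank_sub (hdι := by simpa using hdm) hd hC.1
  · rw [max_eq_right hnm, min_eq_left hnm]
    simpa using card_le_of_le_rank_sub' (hdκ := by simpa using hdn) hd hC.1

/-- **Singleton-like bound for rank-metric codes** (Delsarte/Gabidulin).
If `C ⊆ F_q^{m×n}` has minimum rank distance `d` (with `d ≤ m`, `d ≤ n`), then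
`|C| ≤ q^{max(n,m)·(min(n,m) − d + 1)}`. -/
theorem rank_metric_singleton_bound
    (q : ℕ) (F : Type) [Field F] [Fintype F] (hq : Fintype.card F = q)
    (m n d : ℕ) (hm : 0 < m) (hn : 0 < n) (hd : 0 < d)
    (hdm : d ≤ m) (hdn : d ≤ n)
    (C : Set (Matrix (Fin m) (Fin n) F)) (hC : HasMinRankDist F C d) :
    Nat.card C ≤ q ^ (max n m * (min n m - d + 1)) :=
  rank_metric_singleton_bound_general q F hq m n d hd hdm hdn C hC
end

section
/- Let q be a prime power and let m, n, d be positive integers with m ≥ d and n ≥ d. Then there exists a rank-metric code C ⊆ F_q^{m×n} with minimum rank distance exactly d and cardinality |C| = q^{max(n,m)·(min(n,m) − d + 1)} (i.e., a maximum rank distance (MRD) code exists for every such choice of parameters). -/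
open Matrix Module

/-! Gabidulin's construction. Let `K = 𝔽_{q^N}` and let `g₁, …, g_t ∈ K` be linearly
independent over `F = 𝔽_q` (`t ≤ N`). For `a ∈ K^k` the `q`-linearized polynomial
`f_a = ∑ aᵢ X^{qⁱ}` is `F`-linear on `K`, and `dim ker f_a ≤ k - 1` because `f_a` has at most
`q^{k-1}` roots. The `N × t` matrix of coordinates of `f_a(g_j)` in an `F`-basis of `K` has rank
`t - dim (ker f_a ∩ ⟨g⟩)`, so for `k = t - d + 1` these `q^{Nk}` matrices form an additive code
of minimum rank distance `≥ d`. A nonzero `f_a` vanishing at `g₁, …, g_{k-1}` (`k - 1` linear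
conditions on `k` unknowns) has rank exactly `d`. The case `m < n` follows by transposing. -/

open Polynomial

theorem HasMinRankDist.image_transpose {F : Type} [Field F] {m n d : ℕ}
    {C : Set (Matrix (Fin m) (Fin n) F)} (h : HasMinRankDist F C d) :
    HasMinRankDist F (transpose '' C) d := by
  obtain ⟨h_le, A, hA, B, hB, hAB, h_eq⟩ := h
  refine ⟨?_, Aᵀ, ⟨A, hA, rfl⟩, Bᵀ, ⟨B, hB, rfl⟩, transpose_injective.ne hAB, ?_⟩
  · rintro _ ⟨A, hA, rfl⟩ _ ⟨B, hB, rfl⟩ hAB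
    rw [← transpose_sub, rank_transpose]
    exact h_le A hA B hB (ne_of_apply_ne _ hAB)
  · rw [← transpose_sub, rank_transpose, h_eq]

theorem AddMonoidHom.injective_of_le_rank {F V : Type} [Field F] [AddGroup V] {m n d : ℕ}
    (E : V →+ Matrix (Fin m) (Fin n) F) (hd : 0 < d) (h_le : ∀ v ≠ 0, d ≤ (E v).rank) :
    Function.Injective E := by
  refine (injective_iff_map_eq_zero E).mpr fun v hv ↦ by_contra fun hv_ne ↦ ?_
  have := h_le v hv_ne
  rw [hv, rank_zero] at this
  omega

theorem AddMonoidHom.hasMinRankDist_range {F V : Type} [Field F] [AddGroup V] {m n d : ℕ}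
    (E : V →+ Matrix (Fin m) (Fin n) F) (hd : 0 < d)
    (h_le : ∀ v ≠ 0, d ≤ (E v).rank) (h_eq : ∃ v ≠ 0, (E v).rank = d) :
    HasMinRankDist F (Set.range E) d := by
  obtain ⟨v, hv, hv_rank⟩ := h_eq
  refine ⟨?_, E v, ⟨v, rfl⟩, E 0, ⟨0, rfl⟩, (E.injective_of_le_rank hd h_le).ne hv,
    by rwa [map_zero, sub_zero]⟩
  rintro _ ⟨v, rfl⟩ _ ⟨w, rfl⟩ hvw
  rw [← map_sub]
  exact h_le _ (sub_ne_zero.mpr (ne_of_apply_ne E hvw))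

theorem Module.Basis.rank_toMatrix {ι ι' K M : Type*} [Finite ι] [Fintype ι'] [CommRing K]
    [AddCommGroup M] [Module K M] (b : Basis ι K M) (v : ι' → M) :
    (b.toMatrix v).rank = finrank K (Submodule.span K (Set.range v)) := by
  have h_col : (b.toMatrix v).col = b.equivFun ∘ v := rfl
  rw [rank_eq_finrank_span_cols, h_col, Set.range_comp, ← LinearEquiv.coe_toLinearMap,
    ← Submodule.map_span, LinearEquiv.finrank_map_eq]

theorem Submodule.finrank_map_add_finrank_inf_ker {K M N : Type*} [DivisionRing K]
    [AddCommGroup M] [Module K M] [AddCommGroup N] [Module K N]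
    (f : M →ₗ[K] N) (V : Submodule K M) [FiniteDimensional K V] :
    finrank K (V.map f) + finrank K ↥(V ⊓ LinearMap.ker f) = finrank K V := by
  rw [← LinearMap.range_domRestrict, ← map_comap_subtype,
    ← (equivSubtypeMap V _).finrank_eq, ← LinearMap.ker_domRestrict]
  exact (f.domRestrict V).finrank_range_add_finrank_ker

section LinearizedPoly

variable {R : Type*} [CommSemiring R] (q : ℕ) {k : ℕ}

noncomputable def linearizedPoly (a : Fin k → R) : R[X] :=
  ∑ i, C (a i) * X ^ q ^ (i : ℕ)

theorem eval_linearizedPoly (a : Fin k → R) (x : R) :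
    (linearizedPoly q a).eval x = ∑ i, a i * x ^ q ^ (i : ℕ) := by
  simp [linearizedPoly, eval_finsetSum]

theorem natDegree_linearizedPoly_le (hq : 0 < q) (a : Fin k → R) :
    (linearizedPoly q a).natDegree ≤ q ^ (k - 1) :=
  natDegree_sum_le_of_forall_le _ _ fun i _ ↦
    (natDegree_C_mul_X_pow_le _ _).trans <| Nat.pow_le_pow_right hq (by omega)

theorem coeff_linearizedPoly (hq : 1 < q) (a : Fin k → R) (i : Fin k) :
    (linearizedPoly q a).coeff (q ^ (i : ℕ)) = a i := by
  rw [linearizedPoly, finsetSum_coeff, Finset.sum_eq_single i]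
  · simp
  · intro j _ hji
    rw [coeff_C_mul_X_pow,
      if_neg ((Nat.pow_right_injective hq).ne (Fin.val_injective.ne hji.symm))]
  · simp

theorem linearizedPoly_ne_zero (hq : 1 < q) {a : Fin k → R} (ha : a ≠ 0) :
    linearizedPoly q a ≠ 0 := by
  obtain ⟨i, hi⟩ := Function.ne_iff.mp ha
  exact fun h ↦ hi (by rw [← coeff_linearizedPoly q hq a i, h, coeff_zero, Pi.zero_apply])

end LinearizedPoly

section LinearizedMap

variable (F : Type) [Field F] [Fintype F] {K : Type} [Field K] [Algebra F K] {k : ℕ}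

variable (K k) in
noncomputable def linearizedMap : (Fin k → K) →ₗ[K] K →ₗ[F] K :=
  Fintype.linearCombination K fun i ↦ (FiniteField.frobeniusAlgHom F K ^ (i : ℕ)).toLinearMap

theorem linearizedMap_apply (a : Fin k → K) (x : K) :
    linearizedMap F K k a x = (linearizedPoly (Fintype.card F) a).eval x := by
  simp [linearizedMap, Fintype.linearCombination_apply, eval_linearizedPoly,
    FiniteField.coe_frobeniusAlgHom, pow_iterate]

theorem finrank_ker_linearizedMap_le [Finite K] {a : Fin k → K} (ha : a ≠ 0) :
    finrank F (LinearMap.ker (linearizedMap F K k a)) ≤ k - 1 := by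
  classical
  have := Fintype.ofFinite K
  let Z := (LinearMap.ker (linearizedMap F K k a) : Set K).toFinset
  have h_roots : Z.val ⊆ (linearizedPoly (Fintype.card F) a).roots := fun x hx ↦ by
    rw [mem_roots (linearizedPoly_ne_zero _ Fintype.one_lt_card ha), IsRoot,
      ← linearizedMap_apply]
    simpa [Z] using hx
  have h_card : Fintype.card F ^ finrank F (LinearMap.ker (linearizedMap F K k a)) ≤
      Fintype.card F ^ (k - 1) := by
    calc Fintype.card F ^ finrank F (LinearMap.ker (linearizedMap F K k a))
        = Z.card := by rw [← card_eq_pow_finrank, Set.toFinset_card]; rfl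
      _ ≤ (linearizedPoly (Fintype.card F) a).natDegree := card_le_degree_of_subset_roots h_roots
      _ ≤ Fintype.card F ^ (k - 1) := natDegree_linearizedPoly_le _ Fintype.card_pos a
  exact (Nat.pow_le_pow_iff_right Fintype.one_lt_card).mp h_card

theorem exists_ne_zero_forall_linearizedMap_eq_zero {l : ℕ} (hlk : l < k) (x : Fin l → K) :
    ∃ a : Fin k → K, a ≠ 0 ∧ ∀ j, linearizedMap F K k a (x j) = 0 := by
  let L : (Fin k → K) →ₗ[K] Fin l → K :=
    LinearMap.pi fun j ↦ (LinearMap.applyₗ' K (x j)).comp (linearizedMap F K k)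
  obtain ⟨a, ha, ha_ne⟩ := Submodule.exists_mem_ne_zero_of_ne_bot
    (LinearMap.ker_ne_bot_of_finrank_lt (f := L) (by simpa using hlk))
  exact ⟨a, ha_ne, fun j ↦ congr_fun ha j⟩

end LinearizedMap

section Gabidulin

open Submodule

variable {F : Type} [Field F] [Fintype F] {K : Type} [Field K] [Algebra F K]
  {N t : ℕ} (b : Basis (Fin N) F K) (g : Fin t → K) (k : ℕ)

noncomputable def gabidulinCode : (Fin k → K) →+ Matrix (Fin N) (Fin t) F where
  toFun a := b.toMatrix fun j ↦ linearizedMap F K k a (g j)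
  map_zero' := by ext; simp [Basis.toMatrix_apply]
  map_add' a a' := by ext; simp [Basis.toMatrix_apply]

variable {g k}

theorem rank_gabidulinCode_add_finrank (hg : LinearIndependent F g) (a : Fin k → K) :
    (gabidulinCode b g k a).rank +
      finrank F ↥(span F (Set.range g) ⊓ LinearMap.ker (linearizedMap F K k a)) = t := by
  have h_span : span F (Set.range fun j ↦ linearizedMap F K k a (g j)) =
      (span F (Set.range g)).map (linearizedMap F K k a) := by
    rw [map_span, ← Set.range_comp]
    rfl
  have := FiniteDimensional.span_of_finite F (Set.finite_range g)
  rw [gabidulinCode, AddMonoidHom.coe_mk, ZeroHom.coe_mk, b.rank_toMatrix, h_span,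
    finrank_map_add_finrank_inf_ker, finrank_span_eq_card hg, Fintype.card_fin]

theorem le_rank_gabidulinCode [Finite K] (hg : LinearIndependent F g) {a : Fin k → K}
    (ha : a ≠ 0) : t - (k - 1) ≤ (gabidulinCode b g k a).rank := by
  have h_sum := rank_gabidulinCode_add_finrank b hg a
  have h_ker :
      finrank F ↥(span F (Set.range g) ⊓ LinearMap.ker (linearizedMap F K k a)) ≤ k - 1 :=
    (finrank_mono inf_le_right).trans (finrank_ker_linearizedMap_le F ha)
  omega

theorem exists_rank_gabidulinCode_eq [Finite K] (hg : LinearIndependent F g) (hk : 0 < k)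
    (hkt : k ≤ t) : ∃ a ≠ 0, (gabidulinCode b g k a).rank = t - (k - 1) := by
  let g' := g ∘ Fin.castLE (by omega : k - 1 ≤ t)
  obtain ⟨a, ha, ha_ker⟩ :=
    exists_ne_zero_forall_linearizedMap_eq_zero F (by omega : k - 1 < k) g'
  refine ⟨a, ha, le_antisymm ?_ (le_rank_gabidulinCode b hg ha)⟩
  have h_span : span F (Set.range g') ≤
      span F (Set.range g) ⊓ LinearMap.ker (linearizedMap F K k a) := by
    rw [span_le]
    rintro _ ⟨j, rfl⟩
    exact ⟨subset_span ⟨_, rfl⟩, ha_ker j⟩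
  have h_sum := rank_gabidulinCode_add_finrank b hg a
  have h_ker := finrank_mono h_span
  rw [finrank_span_eq_card (hg.comp _ (Fin.castLE_injective _)), Fintype.card_fin] at h_ker
  omega

end Gabidulin

theorem exists_hasMinRankDist_card_eq (F : Type) [Field F] [Fintype F] {N t d : ℕ}
    (hd : 0 < d) (hdt : d ≤ t) (htN : t ≤ N) :
    ∃ C : Set (Matrix (Fin N) (Fin t) F),
      HasMinRankDist F C d ∧ Nat.card C = Fintype.card F ^ (N * (t - d + 1)) := by
  obtain ⟨p, _⟩ := CharP.exists F
  have : Fact p.Prime := ⟨CharP.char_is_prime F p⟩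
  have : NeZero N := ⟨by omega⟩
  let b := Module.finBasisOfFinrankEq F _ (FiniteField.finrank_extension F p N)
  have hg : LinearIndependent F fun j : Fin t ↦ b (Fin.castLE htN j) :=
    b.linearIndependent.comp _ (Fin.castLE_injective htN)
  let E := gabidulinCode b (fun j ↦ b (Fin.castLE htN j)) (t - d + 1)
  have h_le : ∀ a ≠ 0, d ≤ (E a).rank := fun a ha ↦
    le_of_eq_of_le (by omega) (le_rank_gabidulinCode b hg ha)
  obtain ⟨a, ha, h_eq⟩ :=
    exists_rank_gabidulinCode_eq (k := t - d + 1) b hg (by omega) (by omega)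
  refine ⟨Set.range E, E.hasMinRankDist_range hd h_le ⟨a, ha, h_eq.trans (by omega)⟩, ?_⟩
  rw [Nat.card_range_of_injective (E.injective_of_le_rank hd h_le), Nat.card_fun, Nat.card_fin,
    FiniteField.natCard_extension, Nat.card_eq_fintype_card, pow_mul]

theorem exists_MRD_code_general
    (q : ℕ) (F : Type) [Field F] [Fintype F] (hq : Fintype.card F = q)
    (m n d : ℕ) (hd : 0 < d)
    (hdm : d ≤ m) (hdn : d ≤ n) :
    ∃ C : Set (Matrix (Fin m) (Fin n) F),
      HasMinRankDist F C d ∧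
      Nat.card C = q ^ (max n m * (min n m - d + 1)) := by
  subst hq
  rcases le_total n m with hnm | hmn
  · obtain ⟨C, hC, h_card⟩ := exists_hasMinRankDist_card_eq F hd hdn hnm
    exact ⟨C, hC, by rw [h_card, max_eq_right hnm, min_eq_left hnm]⟩
  · obtain ⟨C, hC, h_card⟩ := exists_hasMinRankDist_card_eq F hd hdm hmn
    refine ⟨transpose '' C, hC.image_transpose, ?_⟩
    rw [Nat.card_image_of_injective transpose_injective, h_card, max_eq_left hmn,
      min_eq_right hmn]

/-- **Existence of MRD codes** (Gabidulin).
For every prime power `q` and `m, n ≥ d ≥ 1` there is a rank-metric code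
`C ⊆ F_q^{m×n}` with minimum rank distance exactly `d` and cardinality
`q^{max(n,m)·(min(n,m) − d + 1)}`. -/
theorem exists_MRD_code
    (q : ℕ) (F : Type) [Field F] [Fintype F] (hq : Fintype.card F = q)
    (m n d : ℕ) (hm : 0 < m) (hn : 0 < n) (hd : 0 < d)
    (hdm : d ≤ m) (hdn : d ≤ n) :
    ∃ C : Set (Matrix (Fin m) (Fin n) F),
      HasMinRankDist F C d ∧
      Nat.card C = q ^ (max n m * (min n m - d + 1)) :=
  exists_MRD_code_general q F hq m n d hd hdm hdn
end

section
/- Let q be a prime power, k ≤ n positive integers, and let A, B ∈ F_q^{k×(n−k)}. Let lift(A) denote the row space of the block matrix [I_k | A] in F_q^n, and similarly lift(B). Then lift(A) and lift(B) are k-dimensional subspaces of F_q^n, and the injection distance satisfies d_I(lift(A), lift(B)) = rank(A − B). In particular, the lifting map is injective. -/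
open Matrix Module

/-! After moving the identity block to the left, `[I_k | M]` is `fromCols 1 M`, so
`x [I_k | A] = y [I_k | B]` holds iff `x = y` and `x A = y B`. Hence `x ↦ x [I_k | M]` is
injective, which gives `dim lift(M) = k`, and `lift(A) ∩ lift(B)` is the image of the left kernel
of `A - B`, whose dimension is `k - rank (A - B)` by rank–nullity. -/

theorem Matrix.rank_eq_zero_iff {F : Type*} [Field F] {m n : Type*} [Finite m] [Fintype n]
    (A : Matrix m n F) : A.rank = 0 ↔ A = 0 := by
  rw [rank_eq_finrank_span_row, Submodule.finrank_eq_zero, Submodule.span_eq_bot,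
    Set.forall_mem_range, ← funext_iff]
  rfl

theorem Matrix.finrank_ker_vecMulLinear {F : Type*} [Field F] {m n : Type*} [Fintype m]
    [Fintype n] (A : Matrix m n F) :
    finrank F (LinearMap.ker A.vecMulLinear) = Fintype.card m - A.rank := by
  have := LinearMap.finrank_range_add_finrank_ker A.vecMulLinear
  rw [range_vecMulLinear, ← rank_eq_finrank_span_row, finrank_fintype_fun_eq_card] at this
  omega

theorem rowSpace_eq_range_vecMulLinear {F : Type} [Field F] {k n : ℕ}
    (M : Matrix (Fin k) (Fin n) F) : rowSpace F M = LinearMap.range M.vecMulLinear :=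
  (range_vecMulLinear M).symm

section paddedLift

variable {F : Type} [Field F] {k n : ℕ}

def finSumFinSubEquiv (hkn : k ≤ n) : Fin k ⊕ Fin (n - k) ≃ Fin n :=
  finSumFinEquiv.trans (finCongr (Nat.add_sub_cancel' hkn))

theorem paddedLift_submatrix_finSumFinSubEquiv (hkn : k ≤ n)
    (M : Matrix (Fin k) (Fin (n - k)) F) :
    (paddedLift F k n 0 M).submatrix id (finSumFinSubEquiv hkn) = fromCols 1 M := by
  ext i (j | c)
  · simp [paddedLift, finSumFinSubEquiv, Matrix.one_apply, Fin.ext_iff, eq_comm]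
  · simp [paddedLift, finSumFinSubEquiv]

theorem vecMul_paddedLift_comp_finSumFinSubEquiv (hkn : k ≤ n)
    (M : Matrix (Fin k) (Fin (n - k)) F) (x : Fin k → F) :
    (x ᵥ* paddedLift F k n 0 M) ∘ finSumFinSubEquiv hkn = Sum.elim x (x ᵥ* M) := by
  change x ᵥ* (paddedLift F k n 0 M).submatrix id (finSumFinSubEquiv hkn) = _
  rw [paddedLift_submatrix_finSumFinSubEquiv, vecMul_fromCols, vecMul_one]

theorem vecMul_paddedLift_eq_iff (hkn : k ≤ n) (A B : Matrix (Fin k) (Fin (n - k)) F)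
    (x y : Fin k → F) :
    x ᵥ* paddedLift F k n 0 A = y ᵥ* paddedLift F k n 0 B ↔ x = y ∧ x ᵥ* A = y ᵥ* B := by
  rw [← (finSumFinSubEquiv hkn).surjective.injective_comp_right.eq_iff,
    vecMul_paddedLift_comp_finSumFinSubEquiv, vecMul_paddedLift_comp_finSumFinSubEquiv,
    Sum.elim_eq_iff]

theorem vecMulLinear_paddedLift_injective (hkn : k ≤ n) (M : Matrix (Fin k) (Fin (n - k)) F) :
    Function.Injective (paddedLift F k n 0 M).vecMulLinear :=
  fun x y h => ((vecMul_paddedLift_eq_iff hkn M M x y).1 h).1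

theorem finrank_rowSpace_paddedLift (hkn : k ≤ n) (M : Matrix (Fin k) (Fin (n - k)) F) :
    finrank F (rowSpace F (paddedLift F k n 0 M)) = k := by
  rw [rowSpace_eq_range_vecMulLinear,
    LinearMap.finrank_range_of_inj (vecMulLinear_paddedLift_injective hkn M), finrank_fin_fun]

theorem rowSpace_paddedLift_inf (hkn : k ≤ n) (A B : Matrix (Fin k) (Fin (n - k)) F) :
    rowSpace F (paddedLift F k n 0 A) ⊓ rowSpace F (paddedLift F k n 0 B) =
      (LinearMap.ker (A - B).vecMulLinear).map (paddedLift F k n 0 A).vecMulLinear := by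
  ext v
  simp only [Submodule.mem_inf, rowSpace_eq_range_vecMulLinear, LinearMap.mem_range,
    Submodule.mem_map, LinearMap.mem_ker, vecMulLinear_apply, vecMul_sub, sub_eq_zero]
  constructor
  · rintro ⟨⟨x, rfl⟩, y, hy⟩
    obtain ⟨rfl, hyx⟩ := (vecMul_paddedLift_eq_iff hkn B A y x).1 hy
    exact ⟨y, hyx.symm, rfl⟩
  · rintro ⟨x, hx, rfl⟩
    exact ⟨⟨x, rfl⟩, x, (vecMul_paddedLift_eq_iff hkn B A x x).2 ⟨rfl, hx.symm⟩⟩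

theorem finrank_rowSpace_paddedLift_inf (hkn : k ≤ n) (A B : Matrix (Fin k) (Fin (n - k)) F) :
    finrank F ↥(rowSpace F (paddedLift F k n 0 A) ⊓ rowSpace F (paddedLift F k n 0 B)) =
      k - (A - B).rank := by
  rw [rowSpace_paddedLift_inf hkn, ← (Submodule.equivMapOfInjective _
    (vecMulLinear_paddedLift_injective hkn A) _).finrank_eq, finrank_ker_vecMulLinear,
    Fintype.card_fin]

end paddedLift

theorem lift_dim_and_injection_distance_general
    (F : Type) [Field F]
    (k n : ℕ) (hkn : k ≤ n)
    (A B : Matrix (Fin k) (Fin (n - k)) F) :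
    finrank F ↥(rowSpace F (paddedLift F k n 0 A)) = k ∧
    finrank F ↥(rowSpace F (paddedLift F k n 0 B)) = k ∧
    k - finrank F ↥(rowSpace F (paddedLift F k n 0 A) ⊓ rowSpace F (paddedLift F k n 0 B))
      = (A - B).rank ∧
    (rowSpace F (paddedLift F k n 0 A) = rowSpace F (paddedLift F k n 0 B) → A = B) := by
  have hrank : (A - B).rank ≤ k := rank_le_height (A - B)
  refine ⟨finrank_rowSpace_paddedLift hkn A, finrank_rowSpace_paddedLift hkn B, ?_, fun h => ?_⟩
  · rw [finrank_rowSpace_paddedLift_inf hkn]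
    omega
  · have hinf := finrank_rowSpace_paddedLift_inf hkn A B
    rw [h, inf_idem, finrank_rowSpace_paddedLift hkn] at hinf
    rw [← sub_eq_zero, ← Matrix.rank_eq_zero_iff]
    omega

/-- **Lifting and the injection distance.**
For `A, B ∈ F_q^{k×(n−k)}`, the liftings `lift(A) = rowspace [I_k | A]` and
`lift(B)` are `k`-dimensional subspaces of `F_q^n`, and
`d_I(lift(A), lift(B)) = k − dim(lift(A) ∩ lift(B)) = rank(A − B)`.
In particular, lifting is injective. -/
theorem lift_dim_and_injection_distance
    (q : ℕ) (F : Type) [Field F] [Fintype F] (hq : Fintype.card F = q)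
    (k n : ℕ) (hk : 0 < k) (hn : 0 < n) (hkn : k ≤ n)
    (A B : Matrix (Fin k) (Fin (n - k)) F) :
    finrank F ↥(rowSpace F (paddedLift F k n 0 A)) = k ∧
    finrank F ↥(rowSpace F (paddedLift F k n 0 B)) = k ∧
    k - finrank F ↥(rowSpace F (paddedLift F k n 0 A) ⊓ rowSpace F (paddedLift F k n 0 B))
      = (A - B).rank ∧
    (rowSpace F (paddedLift F k n 0 A) = rowSpace F (paddedLift F k n 0 B) → A = B) :=
  lift_dim_and_injection_distance_general F k n hkn A B
end

section
/- Let q be a prime power, let k, n, d be positive integers with d ≤ k and 2k ≤ n, and let C ⊆ F_q^{k×(n−k)} be an MRD code with minimum rank distance d (so |C| = q^{(n−k)(k−d+1)}). Then lift(C) = {row space of [I_k | A] : A ∈ C} is a constant dimension code in the Grassmannian G_q(k,n) with minimum injection distance d, and |lift(C)| = q^{(n−k)(k−d+1)}. -/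
open Matrix Module

/-!
Splitting `Fin n → F` as `(Fin k → F) × (Fin (n - k) → F)`, the row space of `[I_k | M]` is the
graph of `c ↦ c ᵥ* M`. Two graphs meet in the graph of `f` restricted to `ker (f - g)`, so
`dim (lift A ⊓ lift B) = k - rank (A - B)`: lifting turns rank distance into injection distance.
A graph determines its map, so lifting is injective and the lifted code has the size of `C`.
-/

namespace LinearMap

theorem graph_injective {R M M₂ : Type*} [Semiring R] [AddCommMonoid M] [AddCommMonoid M₂]
    [Module R M] [Module R M₂] :
    Function.Injective (graph : (M →ₗ[R] M₂) → Submodule R (M × M₂)) := by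
  intro f g h
  ext x
  have hx : (x, f x) ∈ g.graph := h ▸ (mem_graph_iff _ _).2 rfl
  exact (mem_graph_iff _ _).1 hx

section Ring

variable {R M M₂ : Type*} [Ring R] [AddCommGroup M] [AddCommGroup M₂] [Module R M] [Module R M₂]

theorem graph_inf_graph (f g : M →ₗ[R] M₂) :
    f.graph ⊓ g.graph = (ker (f - g)).map (LinearMap.id.prod f) := by
  ext p
  simp only [Submodule.mem_inf, mem_graph_iff, Submodule.mem_map, mem_ker, sub_apply,
    sub_eq_zero]
  constructor
  · rintro ⟨hf, hg⟩
    exact ⟨p.1, hf.symm.trans hg, Prod.ext rfl hf.symm⟩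
  · rintro ⟨x, hfg, rfl⟩
    exact ⟨rfl, hfg⟩

theorem id_prod_injective (f : M →ₗ[R] M₂) : Function.Injective (LinearMap.id.prod f) :=
  fun _ _ h => congrArg Prod.fst h

theorem finrank_graph (f : M →ₗ[R] M₂) : finrank R f.graph = finrank R M := by
  rw [graph_eq_range_prod, finrank_range_of_inj (id_prod_injective f)]

theorem finrank_graph_inf_graph (f g : M →ₗ[R] M₂) :
    finrank R ↥(f.graph ⊓ g.graph) = finrank R (ker (f - g)) := by
  rw [graph_inf_graph]
  exact (Submodule.equivMapOfInjective _ (id_prod_injective f) _).finrank_eq.symm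

end Ring

end LinearMap

namespace Matrix

theorem vecMulLinear_injective {R m n : Type*} [CommSemiring R] [Fintype m] [DecidableEq m] :
    Function.Injective (vecMulLinear : Matrix m n R → (m → R) →ₗ[R] (n → R)) := by
  intro A B h
  ext i j
  simpa using congrFun (LinearMap.congr_fun h (Pi.single i 1)) j

theorem finrank_ker_vecMulLinear_s3 {K m n : Type*} [Field K] [Fintype m] [Fintype n]
    (A : Matrix m n K) : finrank K (LinearMap.ker A.vecMulLinear) = Fintype.card m - A.rank := by
  have hrange : finrank K (LinearMap.range A.vecMulLinear) = A.rank := by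
    rw [← mulVecLin_transpose, ← rank_transpose A]
    rfl
  have := A.vecMulLinear.finrank_range_add_finrank_ker
  rw [hrange, finrank_fintype_fun_eq_card] at this
  omega

end Matrix

section Concat

variable {R : Type*} [Semiring R] {k n : ℕ}

def concatLinear : ((Fin k → R) × (Fin (n - k) → R)) →ₗ[R] (Fin n → R) where
  toFun p j := if h : (j : ℕ) < k then p.1 ⟨j, h⟩ else p.2 ⟨j - k, by omega⟩
  map_add' p p' := by
    funext j
    simp only [Pi.add_apply, Prod.fst_add, Prod.snd_add]
    split_ifs <;> rfl
  map_smul' c p := by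
    funext j
    simp only [Pi.smul_apply, Prod.smul_fst, Prod.smul_snd, RingHom.id_apply]
    split_ifs <;> rfl

theorem concatLinear_apply_of_lt (p : (Fin k → R) × (Fin (n - k) → R)) (i : ℕ) (hi : i < k)
    (hin : i < n) : concatLinear p ⟨i, hin⟩ = p.1 ⟨i, hi⟩ :=
  dif_pos hi

theorem concatLinear_apply_add (p : (Fin k → R) × (Fin (n - k) → R)) (t : Fin (n - k))
    (hkt : k + t < n) : concatLinear p ⟨k + t, hkt⟩ = p.2 t := by
  simp [concatLinear]

theorem concatLinear_injective (hkn : k ≤ n) :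
    Function.Injective (concatLinear : (Fin k → R) × (Fin (n - k) → R) →ₗ[R] (Fin n → R)) := by
  rintro ⟨x, y⟩ ⟨x', y'⟩ h
  refine Prod.ext (funext fun i => ?_) (funext fun t => ?_)
  · have hi := congrFun h ⟨i, by omega⟩
    rwa [concatLinear_apply_of_lt _ _ i.2, concatLinear_apply_of_lt _ _ i.2] at hi
  · have ht := congrFun h ⟨k + t, by omega⟩
    rwa [concatLinear_apply_add, concatLinear_apply_add] at ht

end Concat

section Lift

variable {F : Type} [Field F] {k n : ℕ}

theorem vecMul_paddedLift (M : Matrix (Fin k) (Fin (n - k)) F) (c : Fin k → F) :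
    c ᵥ* paddedLift F k n 0 M = concatLinear (c, c ᵥ* M) := by
  funext ⟨j, hjn⟩
  by_cases hj : j < k
  · rw [concatLinear_apply_of_lt _ _ hj]
    simp only [vecMul, dotProduct, paddedLift, Nat.not_lt_zero, if_false, zero_add, hj,
      dif_pos, mul_ite, mul_one, mul_zero]
    exact (Finset.sum_eq_single_of_mem ⟨j, hj⟩ (Finset.mem_univ _)
      fun i _ hi => if_neg fun h => hi (Fin.ext h.symm)).trans (if_pos rfl)
  · obtain ⟨t, rfl⟩ := Nat.exists_eq_add_of_le (not_lt.1 hj)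
    rw [concatLinear_apply_add _ ⟨t, by omega⟩]
    simp [vecMul, dotProduct, paddedLift]

theorem rowSpace_paddedLift (M : Matrix (Fin k) (Fin (n - k)) F) :
    rowSpace F (paddedLift F k n 0 M) = M.vecMulLinear.graph.map concatLinear := by
  change Submodule.span F (Set.range (paddedLift F k n 0 M).row) = _
  rw [← range_vecMulLinear, LinearMap.graph_eq_range_prod, ← LinearMap.range_comp]
  exact congrArg LinearMap.range (LinearMap.ext fun c => vecMul_paddedLift M c)

theorem sub_finrank_rowSpace_paddedLift_inf (hkn : k ≤ n)
    (A B : Matrix (Fin k) (Fin (n - k)) F) :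
    k - finrank F ↥(rowSpace F (paddedLift F k n 0 A) ⊓ rowSpace F (paddedLift F k n 0 B))
      = (A - B).rank := by
  have hsub : A.vecMulLinear - B.vecMulLinear = (A - B).vecMulLinear :=
    LinearMap.ext fun c => (vecMul_sub A B c).symm
  rw [rowSpace_paddedLift, rowSpace_paddedLift,
    ← Submodule.map_inf _ (concatLinear_injective hkn),
    ← (Submodule.equivMapOfInjective _ (concatLinear_injective hkn) _).finrank_eq,
    LinearMap.finrank_graph_inf_graph, hsub, finrank_ker_vecMulLinear_s3, Fintype.card_fin]
  have := (A - B).rank_le_height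
  omega

theorem rowSpace_paddedLift_injective (hkn : k ≤ n) :
    Function.Injective fun M : Matrix (Fin k) (Fin (n - k)) F =>
      rowSpace F (paddedLift F k n 0 M) := by
  simp only [rowSpace_paddedLift]
  exact (Submodule.map_injective_of_injective (concatLinear_injective hkn)).comp
    (LinearMap.graph_injective.comp vecMulLinear_injective)

end Lift

theorem HasMinRankDist.hasMinInjDist_image {F : Type} [Field F] {m m' N : ℕ}
    {C : Set (Matrix (Fin m) (Fin m') F)} {d k : ℕ} (hC : HasMinRankDist F C d)
    {φ : Matrix (Fin m) (Fin m') F → Submodule F (Fin N → F)} (hφ : Function.Injective φ)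
    (hdist : ∀ A B, k - finrank F ↥(φ A ⊓ φ B) = (A - B).rank) :
    HasMinInjDist F k (φ '' C) d := by
  obtain ⟨hmin, A, hA, B, hB, hAB, hrank⟩ := hC
  refine ⟨?_, φ A, ⟨A, hA, rfl⟩, φ B, ⟨B, hB, rfl⟩, hφ.ne hAB, (hdist A B).trans hrank⟩
  rintro _ ⟨A, hA, rfl⟩ _ ⟨B, hB, rfl⟩ hne
  rw [hdist]
  exact hmin A hA B hB (ne_of_apply_ne φ hne)

theorem lifted_MRD_code_general
    (q : ℕ) (F : Type) [Field F] [Fintype F] (hq : Fintype.card F = q)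
    (k n d : ℕ) (h2k : 2 * k ≤ n)
    (C : Set (Matrix (Fin k) (Fin (n - k)) F)) (hC : IsMRD F C d) :
    (∀ U ∈ (fun M => rowSpace F (paddedLift F k n 0 M)) '' C, finrank F ↥U = k) ∧
    HasMinInjDist F k ((fun M => rowSpace F (paddedLift F k n 0 M)) '' C) d ∧
    Nat.card ((fun M => rowSpace F (paddedLift F k n 0 M)) '' C)
      = q ^ ((n - k) * (k - d + 1)) := by
  have hkn : k ≤ n := by omega
  have hinj := rowSpace_paddedLift_injective (F := F) hkn
  refine ⟨?_, hC.1.hasMinInjDist_image hinj (sub_finrank_rowSpace_paddedLift_inf hkn), ?_⟩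
  · rintro _ ⟨M, -, rfl⟩
    exact finrank_rowSpace_paddedLift hkn M
  · refine (Nat.card_image_of_injective hinj C).trans ?_
    rw [hC.2, hq, max_eq_left (by omega : k ≤ n - k), min_eq_right (by omega : k ≤ n - k)]

/-- **Lifted MRD codes are constant dimension codes.**
If `C ⊆ F_q^{k×(n−k)}` is an MRD code with minimum rank distance `d` (`d ≤ k`,
`2k ≤ n`), then `lift(C)` is a constant dimension code in `G_q(k,n)` with
minimum injection distance `d` and `|lift(C)| = q^{(n−k)(k−d+1)}`. -/
theorem lifted_MRD_code
    (q : ℕ) (F : Type) [Field F] [Fintype F] (hq : Fintype.card F = q)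
    (k n d : ℕ) (hk : 0 < k) (hn : 0 < n) (hd : 0 < d)
    (hdk : d ≤ k) (h2k : 2 * k ≤ n)
    (C : Set (Matrix (Fin k) (Fin (n - k)) F)) (hC : IsMRD F C d) :
    (∀ U ∈ (fun M => rowSpace F (paddedLift F k n 0 M)) '' C, finrank F ↥U = k) ∧
    HasMinInjDist F k ((fun M => rowSpace F (paddedLift F k n 0 M)) '' C) d ∧
    Nat.card ((fun M => rowSpace F (paddedLift F k n 0 M)) '' C)
      = q ^ ((n - k) * (k - d + 1)) :=
  lifted_MRD_code_general q F hq k n d h2k C hC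
end

section
/- Let q be a prime power, let k, n, d be positive integers with d ≤ k and k ≤ n, and let i < i' be nonnegative integers with i'·d + k ≤ n. Let U be the row space of [0_{k×id} | I_k | M] for some matrix M ∈ F_q^{k×(n−k−id)} and let V be the row space of [0_{k×i'd} | I_k | M'] for some matrix M' ∈ F_q^{k×(n−k−i'd)}. Then dim(U ∩ V) ≤ k − d, i.e., the injection distance satisfies d_I(U,V) = k − dim(U ∩ V) ≥ d. -/
open Matrix Module

/-! A vector of `rowSpace [0 | I_k | M]` is `c ᵥ* [0 | I_k | M]`, and its coordinates at the
identity block read back `c`. Vectors of the second row space vanish on the first `i' d ≥ i d + d`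
coordinates, which include the first `d` coordinates of the identity block of the first one; so
the intersection is the image of coefficient vectors `c` whose first `d` entries vanish, a space
of dimension `k - d`. -/

section PaddedLift

variable {F : Type} [Field F] {k n l : ℕ}

theorem paddedLift_apply_of_lt (M : Matrix (Fin k) (Fin (n - k - l)) F) (s : Fin k) {j : Fin n}
    (hj : (j : ℕ) < l) : paddedLift F k n l M s j = 0 :=
  if_pos hj

theorem paddedLift_apply_castLE_natAdd (hl : l + k ≤ n) (M : Matrix (Fin k) (Fin (n - k - l)) F)
    (s t : Fin k) :
    paddedLift F k n l M s (Fin.castLE hl (Fin.natAdd l t)) = (1 : Matrix (Fin k) (Fin k) F) s t := by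
  simp [paddedLift, Matrix.one_apply, Fin.ext_iff, eq_comm]

theorem vecMul_paddedLift_apply_castLE_natAdd (hl : l + k ≤ n)
    (M : Matrix (Fin k) (Fin (n - k - l)) F) (c : Fin k → F) (t : Fin k) :
    (c ᵥ* paddedLift F k n l M) (Fin.castLE hl (Fin.natAdd l t)) = c t := by
  simp only [vecMul, dotProduct, paddedLift_apply_castLE_natAdd]
  exact congrFun (vecMul_one c) t

theorem rowSpace_paddedLift_le_ker_proj (M : Matrix (Fin k) (Fin (n - k - l)) F) {j : Fin n}
    (hj : (j : ℕ) < l) :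
    rowSpace F (paddedLift F k n l M) ≤ LinearMap.ker (LinearMap.proj j : (Fin n → F) →ₗ[F] F) :=
  Submodule.span_le.2 <| Set.range_subset_iff.2 fun s => paddedLift_apply_of_lt M s hj

end PaddedLift

theorem finrank_ker_funLeft_castLE {F : Type} [Field F] {d k : ℕ} (h : d ≤ k) :
    finrank F (LinearMap.ker (LinearMap.funLeft F F (Fin.castLE h))) = k - d := by
  have hsurj := LinearMap.funLeft_surjective_of_injective F F _ (Fin.castLE_injective h)
  have := LinearMap.finrank_range_add_finrank_ker (LinearMap.funLeft F F (Fin.castLE h))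
  rw [LinearMap.range_eq_top.2 hsurj, finrank_top] at this
  simp only [Module.finrank_fin_fun] at this
  omega

theorem finrank_rowSpace_paddedLift_inf_le {F : Type} [Field F] {k n l d : ℕ} (hdk : d ≤ k)
    (hl : l + k ≤ n) (M : Matrix (Fin k) (Fin (n - k - l)) F) (V : Submodule F (Fin n → F))
    (hV : ∀ j : Fin n, (j : ℕ) < l + d → V ≤ LinearMap.ker (LinearMap.proj j)) :
    finrank F ↥(rowSpace F (paddedLift F k n l M) ⊓ V) ≤ k - d := by
  set φ := (paddedLift F k n l M).vecMulLinear
  have hU : rowSpace F (paddedLift F k n l M) = LinearMap.range φ :=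
    (range_vecMulLinear _).symm
  have hcomap : V.comap φ ≤ LinearMap.ker (LinearMap.funLeft F F (Fin.castLE hdk)) := by
    intro c hc
    ext t
    have hvanish := hV (Fin.castLE hl (Fin.natAdd l (Fin.castLE hdk t))) (by simp) hc
    simpa [φ, vecMul_paddedLift_apply_castLE_natAdd hl] using hvanish
  calc finrank F ↥(rowSpace F (paddedLift F k n l M) ⊓ V)
      = finrank F ↥((V.comap φ).map φ) := by rw [Submodule.map_comap_eq, hU]
    _ ≤ finrank F ↥(V.comap φ) := Submodule.finrank_map_le φ _
    _ ≤ finrank F ↥(LinearMap.ker (LinearMap.funLeft F F (Fin.castLE hdk))) :=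
        Submodule.finrank_mono hcomap
    _ = k - d := finrank_ker_funLeft_castLE hdk

theorem component_injection_distance_general
    (F : Type) [Field F]
    (k n d : ℕ)
    (hdk : d ≤ k)
    (i i' : ℕ) (hii' : i < i') (hi' : i' * d + k ≤ n)
    (M : Matrix (Fin k) (Fin (n - k - i * d)) F)
    (M' : Matrix (Fin k) (Fin (n - k - i' * d)) F) :
    finrank F ↥(rowSpace F (paddedLift F k n (i * d) M) ⊓
      rowSpace F (paddedLift F k n (i' * d) M')) ≤ k - d := by
  have hshift : i * d + d ≤ i' * d := by nlinarith
  exact finrank_rowSpace_paddedLift_inf_le hdk (by nlinarith) M _ fun _ hj =>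
    rowSpace_paddedLift_le_ker_proj M' (by omega)

/-- **Distance between different components.**
If `U = rowspace [0_{k×id} | I_k | M]` and `V = rowspace [0_{k×i'd} | I_k | M']`
with `i < i'` and `i'd + k ≤ n`, then the identity blocks are shifted by at
least `d` positions, so `dim(U ∩ V) ≤ k − d`, i.e. `d_I(U,V) ≥ d`. -/
theorem component_injection_distance
    (q : ℕ) (F : Type) [Field F] [Fintype F] (hq : Fintype.card F = q)
    (k n d : ℕ) (hk : 0 < k) (hn : 0 < n) (hd : 0 < d)
    (hdk : d ≤ k) (hkn : k ≤ n)
    (i i' : ℕ) (hii' : i < i') (hi' : i' * d + k ≤ n)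
    (M : Matrix (Fin k) (Fin (n - k - i * d)) F)
    (M' : Matrix (Fin k) (Fin (n - k - i' * d)) F) :
    finrank F ↥(rowSpace F (paddedLift F k n (i * d) M) ⊓
      rowSpace F (paddedLift F k n (i' * d) M')) ≤ k - d :=
  component_injection_distance_general F k n d hdk i i' hii' hi' M M'
end

section
/- Let q be a prime power and let k, n, d be positive integers with d ≤ k and 2k ≤ n. For each j = 0, …, ⌊(n−k)/d⌋ with n − jd − k ≥ d, let C_j ⊆ F_q^{k×(n−k−jd)} be an MRD code with minimum rank distance d, and for j with n − jd − k < d let C_j consist of a single matrix; let 𝒞_j = { row space of [0_{k×jd} | I_k | M] : M ∈ C_j }. Then the union 𝒞 = ⋃_{j=0}^{⌊(n−k)/d⌋} 𝒞_j is a constant dimension code in G_q(k,n) with minimum injection distance d. -/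
open Matrix Module

/-!
Lifting `M ↦ rowSpace [0 | I_k | M]` is the classical lifting of rank-metric codes: two lifts in
the same component meet in the kernel of `x ↦ x (A - B)`, so their injection distance is the
rank distance `rank (A - B)`. Lifts in components `l + d ≤ l'` are far apart because every vector
of the second vanishes on the first `l'` coordinates, which forces the first `d` pivot coordinates
of a common vector to vanish. The component `j = 0` is an MRD code and realises the distance `d`.
-/

theorem Module.finrank_add_card_le_of_forall_apply_eq_zero {F ι κ : Type*} [Field F]
    [Fintype ι] [Fintype κ] {σ : κ → ι} (hσ : Function.Injective σ)
    (W : Submodule F (ι → F)) (hW : ∀ x ∈ W, ∀ t, x (σ t) = 0) :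
    finrank F W + Fintype.card κ ≤ Fintype.card ι := by
  let r : (ι → F) →ₗ[F] (κ → F) := LinearMap.funLeft F F σ
  have hrange : LinearMap.range r = ⊤ :=
    LinearMap.range_eq_top.mpr (LinearMap.funLeft_surjective_of_injective F F σ hσ)
  have hker : W ≤ LinearMap.ker r := fun x hx => funext (hW x hx)
  have hnullity := LinearMap.finrank_range_add_finrank_ker r
  rw [hrange, finrank_top, Module.finrank_fintype_fun_eq_card,
    Module.finrank_fintype_fun_eq_card] at hnullity
  have := Submodule.finrank_mono hker
  omega

theorem Matrix.finrank_range_vecMulLinear {F m n : Type*} [Field F] [Fintype m] [Fintype n]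
    (A : Matrix m n F) : finrank F (LinearMap.range A.vecMulLinear) = A.rank := by
  rw [← Matrix.mulVecLin_transpose, ← Matrix.rank_transpose]
  rfl

theorem rowSpace_eq_range {F : Type} [Field F] {k n : ℕ} (N : Matrix (Fin k) (Fin n) F) :
    rowSpace F N = LinearMap.range N.vecMulLinear :=
  (range_vecMulLinear N).symm

namespace paddedLift

variable {F : Type} [Field F] {k n l : ℕ}

theorem vecMul_apply (M : Matrix (Fin k) (Fin (n - k - l)) F) (x : Fin k → F) (j : Fin n) :
    (x ᵥ* paddedLift F k n l M) j =
      if h₀ : (j : ℕ) < l then 0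
      else if h₁ : (j : ℕ) < l + k then x ⟨(j : ℕ) - l, by omega⟩
      else (x ᵥ* M) ⟨(j : ℕ) - (l + k), by have := j.isLt; omega⟩ := by
  simp only [vecMul, dotProduct, paddedLift]
  split_ifs with h1 h2
  · simp
  · rw [Finset.sum_eq_single (⟨(j : ℕ) - l, by omega⟩ : Fin k)]
    · rw [if_pos (by simp; omega), mul_one]
    · intro i _ hi
      rw [if_neg (fun h => hi (Fin.ext (by simp; omega))), mul_zero]
    · simp
  · rfl

theorem vecMul_apply_of_lt (M : Matrix (Fin k) (Fin (n - k - l)) F) (x : Fin k → F)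
    {j : Fin n} (hj : (j : ℕ) < l) : (x ᵥ* paddedLift F k n l M) j = 0 := by
  rw [vecMul_apply, dif_pos hj]

theorem vecMul_apply_pivot (M : Matrix (Fin k) (Fin (n - k - l)) F) (x : Fin k → F)
    {j : Fin n} (i : Fin k) (hj : (j : ℕ) = l + i) : (x ᵥ* paddedLift F k n l M) j = x i := by
  rw [vecMul_apply, dif_neg (by omega), dif_pos (by omega)]
  congr 1
  exact Fin.ext (by simp only; omega)

theorem vecMul_apply_tail (M : Matrix (Fin k) (Fin (n - k - l)) F) (x : Fin k → F)
    {j : Fin n} (t : Fin (n - k - l)) (hj : (j : ℕ) = l + k + t) :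
    (x ᵥ* paddedLift F k n l M) j = (x ᵥ* M) t := by
  rw [vecMul_apply, dif_neg (by omega), dif_neg (by omega)]
  congr 1
  exact Fin.ext (by simp only; omega)

theorem vecMul_eq_vecMul_iff (hln : l + k ≤ n) {A B : Matrix (Fin k) (Fin (n - k - l)) F}
    {x y : Fin k → F} :
    x ᵥ* paddedLift F k n l A = y ᵥ* paddedLift F k n l B ↔ x = y ∧ x ᵥ* A = y ᵥ* B := by
  constructor
  · intro h
    refine ⟨funext fun i => ?_, funext fun t => ?_⟩
    · have hi := congrFun h ⟨l + i, by omega⟩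
      rwa [vecMul_apply_pivot A x i rfl, vecMul_apply_pivot B y i rfl] at hi
    · have ht := congrFun h ⟨l + k + t, by have := t.isLt; omega⟩
      rwa [vecMul_apply_tail A x t rfl, vecMul_apply_tail B y t rfl] at ht
  · rintro ⟨rfl, hAB⟩
    funext j
    rw [vecMul_apply, vecMul_apply, hAB]

theorem vecMul_mem_rowSpace_iff (hln : l + k ≤ n) {A B : Matrix (Fin k) (Fin (n - k - l)) F}
    {x : Fin k → F} :
    x ᵥ* paddedLift F k n l A ∈ rowSpace F (paddedLift F k n l B) ↔ x ᵥ* A = x ᵥ* B := by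
  simp only [rowSpace_eq_range, LinearMap.mem_range, vecMulLinear_apply,
    vecMul_eq_vecMul_iff hln]
  exact ⟨fun ⟨_, rfl, h⟩ => h.symm, fun h => ⟨x, rfl, h.symm⟩⟩

theorem vecMulLinear_injective (hln : l + k ≤ n) (M : Matrix (Fin k) (Fin (n - k - l)) F) :
    Function.Injective (paddedLift F k n l M).vecMulLinear :=
  fun _ _ h => ((vecMul_eq_vecMul_iff hln).mp h).1

theorem finrank_rowSpace (hln : l + k ≤ n) (M : Matrix (Fin k) (Fin (n - k - l)) F) :
    finrank F (rowSpace F (paddedLift F k n l M)) = k := by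
  rw [rowSpace_eq_range, LinearMap.finrank_range_of_inj (vecMulLinear_injective hln M),
    Module.finrank_fin_fun]

theorem rowSpace_injective (hln : l + k ≤ n) :
    Function.Injective fun M : Matrix (Fin k) (Fin (n - k - l)) F =>
      rowSpace F (paddedLift F k n l M) := by
  intro A B h
  simp only at h
  rw [Matrix.ext_iff_vecMul]
  intro x
  rw [← vecMul_mem_rowSpace_iff hln, ← h, rowSpace_eq_range]
  exact LinearMap.mem_range_self _ x

theorem finrank_inf_rowSpace_add_rank (hln : l + k ≤ n)
    (A B : Matrix (Fin k) (Fin (n - k - l)) F) :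
    finrank F ↥(rowSpace F (paddedLift F k n l A) ⊓ rowSpace F (paddedLift F k n l B))
      + (A - B).rank = k := by
  have hcomap : (rowSpace F (paddedLift F k n l B)).comap (paddedLift F k n l A).vecMulLinear
      = LinearMap.ker (A - B).vecMulLinear := by
    ext x
    simp [vecMul_mem_rowSpace_iff hln, sub_eq_zero]
  have hnullity := LinearMap.finrank_range_add_finrank_ker (A - B).vecMulLinear
  rw [Matrix.finrank_range_vecMulLinear, Module.finrank_fin_fun] at hnullity
  rw [rowSpace_eq_range (paddedLift F k n l A), ← Submodule.map_comap_eq, hcomap, ← (Submodule.equivMapOfInjective _ (vecMulLinear_injective hln A) _).finrank_eq]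
  omega

theorem finrank_inf_rowSpace_add_le {l' d : ℕ} (hll' : l + d ≤ l') (hl'n : l' + k ≤ n)
    (hdk : d ≤ k) (A : Matrix (Fin k) (Fin (n - k - l)) F)
    (B : Matrix (Fin k) (Fin (n - k - l')) F) :
    finrank F ↥(rowSpace F (paddedLift F k n l A) ⊓ rowSpace F (paddedLift F k n l' B))
      + d ≤ k := by
  set P := (paddedLift F k n l A).vecMulLinear
  set W := (rowSpace F (paddedLift F k n l' B)).comap P
  have hvanish : ∀ x ∈ W, ∀ t : Fin d, x (Fin.castLE hdk t) = 0 := by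
    intro x hx t
    rw [Submodule.mem_comap, rowSpace_eq_range] at hx
    obtain ⟨y, hy⟩ := hx
    have ht := congrFun hy ⟨l + t, by omega⟩
    rwa [vecMulLinear_apply, vecMulLinear_apply, vecMul_apply_of_lt B y (by simp; omega),
      vecMul_apply_pivot A x (Fin.castLE hdk t) rfl, eq_comm] at ht
  have hW := Module.finrank_add_card_le_of_forall_apply_eq_zero (Fin.castLE_injective hdk) W
    hvanish
  rw [Fintype.card_fin, Fintype.card_fin] at hW
  have hmap := Submodule.finrank_map_le P W
  rw [Submodule.map_comap_eq, ← rowSpace_eq_range] at hmap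
  omega

end paddedLift

theorem multi_component_min_distance_general
    (F : Type) [Field F] [Fintype F]
    (k n d : ℕ)
    (hdk : d ≤ k) (h2k : 2 * k ≤ n)
    (C : ∀ j : ℕ, Set (Matrix (Fin k) (Fin (n - k - j * d)) F))
    (hC : ∀ j ≤ (n - k) / d,
      if d ≤ n - j * d - k then IsMRD F (C j) d else ∃ M, C j = {M}) :
    (∀ U ∈ {U : Submodule F (Fin n → F) | ∃ j ≤ (n - k) / d, ∃ M ∈ C j,
        U = rowSpace F (paddedLift F k n (j * d) M)}, finrank F ↥U = k) ∧
    HasMinInjDist F k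
      {U : Submodule F (Fin n → F) | ∃ j ≤ (n - k) / d, ∃ M ∈ C j,
        U = rowSpace F (paddedLift F k n (j * d) M)} d := by
  have hfits : ∀ j ≤ (n - k) / d, j * d + k ≤ n := fun j hj => by
    have := (Nat.mul_le_mul_right d hj).trans (Nat.div_mul_le_self (n - k) d)
    omega
  have hfar : ∀ {i j}, i < j → i * d + d ≤ j * d := fun hij => by
    simpa [Nat.succ_mul] using Nat.mul_le_mul_right d hij
  refine ⟨?_, ?_, ?_⟩
  · rintro U ⟨j, hj, M, -, rfl⟩
    exact paddedLift.finrank_rowSpace (hfits j hj) M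
  · rintro U ⟨i, hi, A, hA, rfl⟩ V ⟨j, hj, B, hB, rfl⟩ hUV
    rcases lt_trichotomy i j with hij | rfl | hij
    · have := paddedLift.finrank_inf_rowSpace_add_le (hfar hij) (hfits j hj) hdk A B
      omega
    · have hAB : A ≠ B := fun h => hUV (h ▸ rfl)
      have hdist := paddedLift.finrank_inf_rowSpace_add_rank (hfits i hi) A B
      have hCi := hC i hi
      split_ifs at hCi
      · have := hCi.1.1 A hA B hB hAB
        omega
      · obtain ⟨M, hM⟩ := hCi
        rw [hM, Set.mem_singleton_iff] at hA hB
        exact absurd (hA.trans hB.symm) hAB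
    · have := paddedLift.finrank_inf_rowSpace_add_le (hfar hij) (hfits i hi) hdk B A
      rw [inf_comm] at this
      omega
  · have h0 : 0 ≤ (n - k) / d := Nat.zero_le _
    have hC0 := hC 0 h0
    rw [if_pos (by omega)] at hC0
    obtain ⟨⟨-, A, hA, B, hB, hAB, hrank⟩, -⟩ := hC0
    refine ⟨_, ⟨0, h0, A, hA, rfl⟩, _, ⟨0, h0, B, hB, rfl⟩,
      fun h => hAB (paddedLift.rowSpace_injective (hfits 0 h0) h), ?_⟩
    have := paddedLift.finrank_inf_rowSpace_add_rank (hfits 0 h0) A B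
    omega

/-- **Multi-component lifted MRD codes have minimum injection distance `d`.**
For `j = 0, …, ⌊(n−k)/d⌋` let `C_j ⊆ F_q^{k×(n−k−jd)}` be an MRD code with
minimum rank distance `d` when `n − jd − k ≥ d`, and a single matrix otherwise.
Then the union of the lifted component codes
`𝒞_j = {rowspace [0_{k×jd} | I_k | M] : M ∈ C_j}` is a constant dimension code
in `G_q(k,n)` with minimum injection distance `d`. -/
theorem multi_component_min_distance
    (q : ℕ) (F : Type) [Field F] [Fintype F] (hq : Fintype.card F = q)
    (k n d : ℕ) (hk : 0 < k) (hn : 0 < n) (hd : 0 < d)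
    (hdk : d ≤ k) (h2k : 2 * k ≤ n)
    (C : ∀ j : ℕ, Set (Matrix (Fin k) (Fin (n - k - j * d)) F))
    (hC : ∀ j ≤ (n - k) / d,
      if d ≤ n - j * d - k then IsMRD F (C j) d else ∃ M, C j = {M}) :
    (∀ U ∈ {U : Submodule F (Fin n → F) | ∃ j ≤ (n - k) / d, ∃ M ∈ C j,
        U = rowSpace F (paddedLift F k n (j * d) M)}, finrank F ↥U = k) ∧
    HasMinInjDist F k
      {U : Submodule F (Fin n → F) | ∃ j ≤ (n - k) / d, ∃ M ∈ C j,
        U = rowSpace F (paddedLift F k n (j * d) M)} d :=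
  multi_component_min_distance_general F k n d hdk h2k C hC
end
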